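/- Suppose that for every m ∈ μ(𝒫), 𝒫₁(m) is indistinguishable from 𝒫₀(m) in the weak distance and the test φ_m is a.s. continuous under every Q ∈ 𝒫₁(m). If the confidence set C(Z) = {m : φ_m(Z)=0} has confidence level 1−α with 1−α > 0, and μ(𝒫) is an unbounded subset of ℝ, then for every P ∈ 𝒫 the set C(Z) is unbounded with strictly positive probability under P^{⊗n}. -/

import Mathlib

/-!
Fix `P ∈ 𝔓` and an attainable value `m`. The acceptance region `{φ m = 0}` has
`P^{⊗n}`-probability at least `1 - α`: either `μ P = m` and this is coverage at `P`, or `P` is a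
weak limit of distributions `P_k` with `μ P_k = m`; then `P_k^{⊗n} → P^{⊗n}` weakly, and since
`φ m` is `{0,1}`-valued the boundary of `{φ m = 0}` consists of discontinuity points of `φ m`,
so it is `P^{⊗n}`-null and the portmanteau theorem passes the bound to the limit.
Choosing attainable `m_j` with `|m_j| → ∞`, the event "`m_j ∈ C(Z)` for infinitely many `j`"
has probability at least `1 - α` by Fatou's lemma for sets, and on it `C(Z)` is unbounded.
-/

open MeasureTheory Filter

/-- The distribution of an i.i.d. sample of size `n` from `P`: the `n`-fold product measure. -/
noncomputable def sampleDist (n : ℕ) {E : Type*} [MeasurableSpace E]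
    (P : ProbabilityMeasure E) : Measure (Fin n → E) :=
  Measure.pi fun _ => (P : Measure E)

/-- `E_P[φ]`, the rejection probability of the test `φ` under `P^{⊗n}`. -/
noncomputable def tpower (n : ℕ) {E : Type*} [MeasurableSpace E]
    (P : ProbabilityMeasure E) (φ : (Fin n → E) → ℝ) : ℝ :=
  ∫ z, φ z ∂ sampleDist n P

/-- A test is a measurable function with values in `[0,1]`. -/
def IsTest {E : Type*} [MeasurableSpace E] (φ : E → ℝ) : Prop :=
  Measurable φ ∧ ∀ z, φ z ∈ Set.Icc (0:ℝ) 1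

/-- `φ` is almost-surely continuous under `Q` (i.e. under `Q^{⊗n}`). -/
def ASCont {E : Type*} [MeasurableSpace E] [TopologicalSpace E] (n : ℕ)
    (Q : ProbabilityMeasure E) (φ : (Fin n → E) → ℝ) : Prop :=
  sampleDist n Q {z | ¬ ContinuousAt φ z} = 0

/-- Convergence in distribution: integrals of every bounded continuous function converge. -/
def ConvDM {E : Type*} [MeasurableSpace E] [TopologicalSpace E]
    (P : ℕ → Measure E) (Q : Measure E) : Prop :=
  ∀ g : E → ℝ, Continuous g → (∃ C, ∀ x, |g x| ≤ C) →
    Tendsto (fun k => ∫ x, g x ∂ P k) atTop (nhds (∫ x, g x ∂ Q))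

open Topology ENNReal

theorem ConvDM.tendsto {E : Type*} [MeasurableSpace E] [TopologicalSpace E]
    [OpensMeasurableSpace E] {P : ℕ → ProbabilityMeasure E} {Q : ProbabilityMeasure E}
    (h : ConvDM (fun k => (P k : Measure E)) Q) : Tendsto P atTop (𝓝 Q) :=
  ProbabilityMeasure.tendsto_iff_forall_integral_tendsto.2 fun f =>
    h f f.continuous ⟨‖f‖, fun x => by simpa using f.norm_coe_le_norm x⟩

theorem MeasureTheory.ProbabilityMeasure.tendsto_pi_const {ι E γ : Type*} [Fintype ι]
    [MeasurableSpace E] [TopologicalSpace E] [OpensMeasurableSpace E] [SecondCountableTopology E]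
    [TopologicalSpace.PseudoMetrizableSpace E] {F : Filter γ} {P : γ → ProbabilityMeasure E}
    {Q : ProbabilityMeasure E} (h : Tendsto P F (𝓝 Q)) :
    Tendsto (fun k => ProbabilityMeasure.pi fun _ : ι => P k) F
      (𝓝 (ProbabilityMeasure.pi fun _ => Q)) :=
  (ProbabilityMeasure.continuous_pi.tendsto _).comp (tendsto_pi_nhds.2 fun _ => h)

theorem le_sampleDist_of_tendsto {E : Type*} [MeasurableSpace E] [TopologicalSpace E]
    [OpensMeasurableSpace E] [SecondCountableTopology E]
    [TopologicalSpace.PseudoMetrizableSpace E] {n : ℕ} {P : ℕ → ProbabilityMeasure E}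
    {Q : ProbabilityMeasure E} (hPQ : Tendsto P atTop (𝓝 Q)) {A : Set (Fin n → E)}
    (hA : sampleDist n Q (frontier A) = 0) {c : ℝ≥0∞} (hc : ∀ k, c ≤ sampleDist n (P k) A) :
    c ≤ sampleDist n Q A :=
  ge_of_tendsto' (ProbabilityMeasure.tendsto_measure_of_null_frontier_of_tendsto'
    (ProbabilityMeasure.tendsto_pi_const hPQ) hA) hc

theorem MeasureTheory.limsup_measure_le_measure_limsup {α : Type*} [MeasurableSpace α]
    {μ : Measure α} [IsFiniteMeasure μ] {s : ℕ → Set α} (hs : ∀ n, NullMeasurableSet (s n) μ) :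
    limsup (fun n => μ (s n)) atTop ≤ μ (limsup s atTop) := by
  have htail : Antitone fun N => ⋃ i ≥ N, s i := fun N N' hN =>
    Set.biUnion_mono (fun i (hi : N' ≤ i) => hN.trans hi) fun _ _ => le_rfl
  simp only [limsup_eq_iInf_iSup_of_nat, Set.iSup_eq_iUnion, Set.iInf_eq_iInter]
  rw [htail.measure_iInter (fun N => .biUnion (Set.to_countable _) fun i _ => hs i)
    ⟨0, measure_ne_top _ _⟩]
  gcongr with N
  exact iSup₂_le fun i hi => measure_mono (Set.subset_biUnion_of_mem hi)

theorem Bornology.exists_tendsto_norm_atTop_of_not_isBounded {E : Type*}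
    [SeminormedAddCommGroup E] {S : Set E} (hS : ¬ Bornology.IsBounded S) :
    ∃ u : ℕ → E, (∀ j, u j ∈ S) ∧ Tendsto (fun j => ‖u j‖) atTop atTop := by
  have : ∀ j : ℕ, ∃ x ∈ S, (j : ℝ) < ‖x‖ := fun j => by
    by_contra! h
    exact hS (isBounded_iff_forall_norm_le.2 ⟨j, h⟩)
  choose u huS hu using this
  exact ⟨u, huS, tendsto_atTop_mono (fun j => (hu j).le) tendsto_natCast_atTop_atTop⟩

theorem frontier_setOf_eq_subset_setOf_not_continuousAt {X Y : Type*} [TopologicalSpace X]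
    [TopologicalSpace Y] [T1Space Y] {f : X → Y} {a b : Y} (hf : ∀ x, f x = a ∨ f x = b) :
    frontier {x | f x = a} ⊆ {x | ¬ ContinuousAt f x} := by
  intro x hx hcont
  rcases eq_or_ne a b with rfl | hab
  · have huniv : {x | f x = a} = Set.univ := Set.eq_univ_of_forall fun x => (hf x).elim id id
    simp [huniv] at hx
  rcases hf x with hxa | hxb
  · refine hx.2 (mem_interior_iff_mem_nhds.2 (Filter.mem_of_superset
      (hcont.preimage_mem_nhds (isOpen_compl_singleton.mem_nhds (hxa ▸ hab))) fun y hy => ?_))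
    exact (hf y).resolve_right hy
  · obtain ⟨y, hya, hy⟩ := mem_closure_iff_nhds.1 hx.1 _
      (hcont.preimage_mem_nhds (isOpen_compl_singleton.mem_nhds (hxb ▸ hab.symm)))
    exact hya hy

theorem Bornology.limsup_setOf_mem_subset_setOf_not_isBounded {Z E : Type*}
    [SeminormedAddCommGroup E] {C : Z → Set E} {u : ℕ → E}
    (hu : Tendsto (fun j => ‖u j‖) atTop atTop) :
    limsup (fun j => {z | u j ∈ C z}) atTop ⊆ {z | ¬ Bornology.IsBounded (C z)} := by
  intro z hz hbdd
  obtain ⟨R, hR⟩ := isBounded_iff_forall_norm_le.1 hbdd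
  obtain ⟨j, hjC, hjR⟩ :=
    ((mem_limsup_iff_frequently_mem.1 hz).and_eventually (hu.eventually_gt_atTop R)).exists
  exact (hR _ hjC).not_gt hjR

instance sampleDist.instIsProbabilityMeasure (n : ℕ) {E : Type*} [MeasurableSpace E]
    (P : ProbabilityMeasure E) : IsProbabilityMeasure (sampleDist n P) :=
  inferInstanceAs (IsProbabilityMeasure (Measure.pi _))

section ConfidenceSet

variable {E Θ : Type*} [MeasurableSpace E] {n : ℕ} {𝔓 : Set (ProbabilityMeasure E)}
  {μ : ProbabilityMeasure E → Θ} {φ : Θ → (Fin n → E) → ℝ} {α : ℝ}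

theorem ofReal_le_sampleDist_of_sInf_eq
    (hconf : sInf ((fun P => (sampleDist n P {z | μ P ∈ μ '' 𝔓 ∧ φ (μ P) z = 0}).toReal) '' 𝔓)
      = 1 - α)
    {P : ProbabilityMeasure E} (hP : P ∈ 𝔓) :
    ENNReal.ofReal (1 - α) ≤ sampleDist n P {z | φ (μ P) z = 0} := by
  rw [ENNReal.ofReal_le_iff_le_toReal (measure_ne_top _ _), ← hconf]
  have hcover : {z | μ P ∈ μ '' 𝔓 ∧ φ (μ P) z = 0} = {z | φ (μ P) z = 0} := by
    simp only [Set.mem_image_of_mem μ hP, true_and]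
  rw [← hcover]
  exact csInf_le ⟨0, by rintro _ ⟨Q, -, rfl⟩; positivity⟩ ⟨P, hP, rfl⟩

theorem ofReal_le_sampleDist_setOf_eq_zero [TopologicalSpace E] [OpensMeasurableSpace E]
    [SecondCountableTopology E] [TopologicalSpace.PseudoMetrizableSpace E]
    (hφ : ∀ m z, φ m z = 0 ∨ φ m z = 1)
    (hindist : ∀ m ∈ μ '' 𝔓, ∀ Q ∈ 𝔓, μ Q ≠ m →
      ∃ P : ℕ → ProbabilityMeasure E, (∀ k, P k ∈ 𝔓 ∧ μ (P k) = m) ∧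
        ConvDM (fun k => (P k : Measure E)) (Q : Measure E))
    (hcont : ∀ m ∈ μ '' 𝔓, ∀ Q ∈ 𝔓, μ Q ≠ m → ASCont n Q (φ m))
    (hconf : sInf ((fun P => (sampleDist n P {z | μ P ∈ μ '' 𝔓 ∧ φ (μ P) z = 0}).toReal) '' 𝔓)
      = 1 - α)
    {m : Θ} (hm : m ∈ μ '' 𝔓) {P : ProbabilityMeasure E} (hP : P ∈ 𝔓) :
    ENNReal.ofReal (1 - α) ≤ sampleDist n P {z | φ m z = 0} := by
  by_cases hPm : μ P = m
  · exact hPm ▸ ofReal_le_sampleDist_of_sInf_eq hconf hP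
  obtain ⟨Pk, hPk, hconv⟩ := hindist m hm P hP hPm
  have hfrontier : sampleDist n P (frontier {z | φ m z = 0}) = 0 :=
    measure_mono_null (frontier_setOf_eq_subset_setOf_not_continuousAt (hφ m))
      (hcont m hm P hP hPm)
  refine le_sampleDist_of_tendsto hconv.tendsto hfrontier fun k => ?_
  exact (hPk k).2 ▸ ofReal_le_sampleDist_of_sInf_eq hconf (hPk k).1

end ConfidenceSet

theorem confidence_set_unbounded_with_positive_probability_general (l n : ℕ)
    (𝔓 : Set (ProbabilityMeasure (Fin l → ℝ)))
    (μ : ProbabilityMeasure (Fin l → ℝ) → ℝ)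
    (φ : ℝ → (Fin n → Fin l → ℝ) → ℝ)
    (hφ : ∀ m, Measurable (φ m) ∧ ∀ z, φ m z = 0 ∨ φ m z = 1)
    (hindist : ∀ m ∈ μ '' 𝔓, ∀ Q ∈ 𝔓, μ Q ≠ m →
      ∃ P : ℕ → ProbabilityMeasure (Fin l → ℝ), (∀ k, P k ∈ 𝔓 ∧ μ (P k) = m) ∧
        ConvDM (fun k => (P k : Measure (Fin l → ℝ))) (Q : Measure (Fin l → ℝ)))
    (hcont : ∀ m ∈ μ '' 𝔓, ∀ Q ∈ 𝔓, μ Q ≠ m → ASCont n Q (φ m))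
    (α : ℝ)
    (hconf : sInf ((fun P => (sampleDist n P {z | μ P ∈ μ '' 𝔓 ∧ φ (μ P) z = 0}).toReal) '' 𝔓)
      = 1 - α)
    (hα : 0 < 1 - α)
    (hunb : ¬ Bornology.IsBounded (μ '' 𝔓)) :
    ∀ P ∈ 𝔓,
      0 < sampleDist n P {z | ¬ Bornology.IsBounded {m | m ∈ μ '' 𝔓 ∧ φ m z = 0}} := by
  intro P hP
  obtain ⟨u, hu𝔓, hu⟩ := Bornology.exists_tendsto_norm_atTop_of_not_isBounded hunb
  have hacc : ∀ j, {z | u j ∈ {m | m ∈ μ '' 𝔓 ∧ φ m z = 0}} = {z | φ (u j) z = 0} := fun j => by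
    simp only [Set.mem_ofPred_eq, hu𝔓 j, true_and]
  calc 0 < ENNReal.ofReal (1 - α) := ENNReal.ofReal_pos.2 hα
    _ ≤ limsup (fun j => sampleDist n P {z | φ (u j) z = 0}) atTop :=
      le_limsup_of_frequently_le (.of_forall fun j => ofReal_le_sampleDist_setOf_eq_zero
        (fun m => (hφ m).2) hindist hcont hconf (hu𝔓 j) hP) (by isBoundedDefault)
    _ ≤ sampleDist n P (limsup (fun j => {z | φ (u j) z = 0}) atTop) :=
      limsup_measure_le_measure_limsup fun j =>
        (measurableSet_eq_fun (hφ (u j)).1 measurable_const).nullMeasurableSet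
    _ ≤ _ := by
      simp_rw [← hacc]
      exact measure_mono (Bornology.limsup_setOf_mem_subset_setOf_not_isBounded hu)

/-- Theorem 2, second part: if in addition `1 − α > 0` and `μ(𝔓)` is
unbounded, then under every `P ∈ 𝔓` the confidence set is unbounded with strictly positive
probability. -/
theorem confidence_set_unbounded_with_positive_probability (l n : ℕ) (hl : 1 ≤ l) (hn : 1 ≤ n)
    (𝔓 : Set (ProbabilityMeasure (Fin l → ℝ)))
    (μ : ProbabilityMeasure (Fin l → ℝ) → ℝ)
    (φ : ℝ → (Fin n → Fin l → ℝ) → ℝ)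
    (hφ : ∀ m, Measurable (φ m) ∧ ∀ z, φ m z = 0 ∨ φ m z = 1)
    (hindist : ∀ m ∈ μ '' 𝔓, ∀ Q ∈ 𝔓, μ Q ≠ m →
      ∃ P : ℕ → ProbabilityMeasure (Fin l → ℝ), (∀ k, P k ∈ 𝔓 ∧ μ (P k) = m) ∧
        ConvDM (fun k => (P k : Measure (Fin l → ℝ))) (Q : Measure (Fin l → ℝ)))
    (hcont : ∀ m ∈ μ '' 𝔓, ∀ Q ∈ 𝔓, μ Q ≠ m → ASCont n Q (φ m))
    (α : ℝ)
    (hconf : sInf ((fun P => (sampleDist n P {z | μ P ∈ μ '' 𝔓 ∧ φ (μ P) z = 0}).toReal) '' 𝔓)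
      = 1 - α)
    (hα : 0 < 1 - α)
    (hunb : ¬ Bornology.IsBounded (μ '' 𝔓)) :
    ∀ P ∈ 𝔓,
      0 < sampleDist n P {z | ¬ Bornology.IsBounded {m | m ∈ μ '' 𝔓 ∧ φ m z = 0}} :=
  confidence_set_unbounded_with_positive_probability_general l n 𝔓 μ φ hφ hindist hcont α hconf hα
    hunb
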